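/- Suppose n is even, δ = 0 and σ ≠ 0, and set c = cos((n/2)π/(n+1)) > 0, so λ_{n/2} = 2σc = −λ_{(n+2)/2} are the two eigenvalues of smallest magnitude and κ(n/2) = κ((n+2)/2). Then the structured distance to singularity is d_F^𝒯(T) = min_{S ∈ 𝒮 ∩ 𝒯} ‖T − S‖_F = |λ_{n/2}|/κ(n/2), and it is attained by the two distinct matrices M± = T ∓ (λ_{n/2}/κ(n/2)²)·(n; 1/n, ±c/(n−1)), both of which are singular symmetric tridiagonal Toeplitz matrices at Frobenius distance |λ_{n/2}|/κ(n/2) from T. -/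

import Mathlib

/-!
The vectors `evec n h`, `h = 1, …, n`, are eigenvectors of every `tridiag n d s`, with eigenvalues
`lam n d s h`, and they are linearly independent because the values `cos (h π / (n + 1))` are
distinct. Hence `det (tridiag n d s) = ∏ₕ lam n d s h`, so `tridiag n d s` is singular iff
`lam n d s h = 0` for some `h`: a line in the `(d, s)`-plane. On `𝒯` the squared Frobenius norm is
the weighted form `n d² + 2 (n - 1) s²`, so by Cauchy–Schwarz the distance from `T` to that line is
`|λ_h| / κ(h)`, attained at the orthogonal projection. For `δ = 0` this distance increases with
`cos² (h π / (n + 1))`, which is smallest at `h = n / 2` and `h = n / 2 + 1`, where the cosines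
are `± c`.
-/

open Real Filter

noncomputable def tridiag (n : ℕ) (d s : ℝ) : Matrix (Fin n) (Fin n) ℝ :=
  Matrix.of fun i j =>
    if (i : ℕ) = (j : ℕ) then d
    else if (i : ℕ) + 1 = (j : ℕ) ∨ (j : ℕ) + 1 = (i : ℕ) then s else 0

noncomputable def lam (n : ℕ) (δ σ : ℝ) (h : ℕ) : ℝ :=
  δ + 2 * σ * Real.cos (h * Real.pi / (n + 1))

noncomputable def kap (n h : ℕ) : ℝ :=
  Real.sqrt (1 / (n : ℝ) + 2 / ((n : ℝ) - 1) * Real.cos (h * Real.pi / (n + 1)) ^ 2)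

noncomputable def evec (n h : ℕ) : Fin n → ℝ :=
  fun k => Real.sqrt (2 / (n + 1)) * Real.sin (h * (k.1 + 1) * Real.pi / (n + 1))

noncomputable def frobNorm {n : ℕ} (A : Matrix (Fin n) (Fin n) ℝ) : ℝ :=
  Real.sqrt (∑ i, ∑ j, A i j ^ 2)

open Matrix

section

variable {n : ℕ}

lemma tridiag_apply_self (d s : ℝ) (i : Fin n) : tridiag n d s i i = d := by
  simp [tridiag]

lemma tridiag_sub (d s d' s' : ℝ) :
    tridiag n d s - tridiag n d' s' = tridiag n (d - d') (s - s') := by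
  ext i j
  simp only [Matrix.sub_apply, tridiag, Matrix.of_apply]
  split_ifs <;> ring

lemma smul_tridiag (r d s : ℝ) : r • tridiag n d s = tridiag n (r * d) (r * s) := by
  ext i j
  simp only [Matrix.smul_apply, tridiag, Matrix.of_apply, smul_eq_mul]
  split_ifs <;> ring

lemma sum_fin_ite_succ_eq (f : ℕ → ℝ) (hf0 : f 0 = 0) (hfn : f (n + 1) = 0) {k : ℕ}
    (hk : k ≤ n + 1) : ∑ j : Fin n, (if (j : ℕ) + 1 = k then f (j + 1) else 0) = f k := by
  rw [Fin.sum_univ_eq_sum_range (fun j => if j + 1 = k then f (j + 1) else 0)]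
  rcases k with _ | k
  · simp [hf0]
  · simp only [add_left_inj, Finset.sum_ite_eq', Finset.mem_range]
    split_ifs with h
    · rfl
    · rw [show k = n by omega, hfn]

lemma tridiag_mulVec_apply (d s : ℝ) (f : ℕ → ℝ) (hf0 : f 0 = 0) (hfn : f (n + 1) = 0)
    (i : Fin n) :
    (tridiag n d s *ᵥ fun j => f (j + 1)) i = s * f i + d * f (i + 1) + s * f (i + 2) := by
  have hterm : ∀ j : Fin n, tridiag n d s i j * f (j + 1) =
      s * (if (j : ℕ) + 1 = i then f (j + 1) else 0) +
      d * (if (j : ℕ) + 1 = i + 1 then f (j + 1) else 0) +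
      s * (if (j : ℕ) + 1 = i + 2 then f (j + 1) else 0) := by
    intro j
    simp only [tridiag, Matrix.of_apply]
    split_ifs <;> first | ring1 | omega
  simp only [Matrix.mulVec, dotProduct, hterm, Finset.sum_add_distrib, ← Finset.mul_sum]
  rw [sum_fin_ite_succ_eq f hf0 hfn (by omega), sum_fin_ite_succ_eq f hf0 hfn (by omega),
    sum_fin_ite_succ_eq f hf0 hfn (by omega)]

lemma tridiag_mulVec_evec (d s : ℝ) (h : ℕ) :
    tridiag n d s *ᵥ evec n h = lam n d s h • evec n h := by
  set θ : ℝ := h * π / (n + 1)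
  set f : ℕ → ℝ := fun k => sqrt (2 / (n + 1)) * sin (k * θ) with hf
  have hevec : evec n h = fun j : Fin n => f (j + 1) := by
    funext j
    simp only [evec, hf, θ]
    push_cast
    ring_nf
  have hfn : f (n + 1) = 0 := by
    simp only [hf, θ]
    rw [show ((n + 1 : ℕ) : ℝ) * (h * π / (n + 1)) = h * π by push_cast; field_simp,
      sin_nat_mul_pi, mul_zero]
  have hsin (x : ℝ) : sin (x - θ) + sin (x + θ) = 2 * cos θ * sin x := by
    rw [sin_sub, sin_add]; ring
  ext i
  rw [hevec, tridiag_mulVec_apply d s f (by simp [hf]) hfn, Pi.smul_apply, smul_eq_mul]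
  have key := hsin ((i + 1 : ℕ) * θ)
  simp only [hf, lam]
  push_cast at key ⊢
  rw [show ((i : ℝ) + 1) * θ - θ = i * θ by ring,
    show ((i : ℝ) + 1) * θ + θ = (i + 2) * θ by ring] at key
  linear_combination (s * sqrt (2 / (n + 1))) * key

lemma evec_ne_zero {h : ℕ} (h1 : 1 ≤ h) (hn : h ≤ n) : evec n h ≠ 0 := by
  have hn1 : (1 : ℝ) ≤ n := by exact_mod_cast h1.trans hn
  intro hzero
  have h0 := congrFun hzero ⟨0, by omega⟩
  have hsin : 0 < sin (h * π / (n + 1)) := by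
    apply sin_pos_of_pos_of_lt_pi (by positivity)
    rw [div_lt_iff₀ (by positivity)]
    have : (h : ℝ) ≤ n := by exact_mod_cast hn
    nlinarith [pi_pos]
  have hC : 0 < sqrt (2 / (n + 1)) := sqrt_pos.2 (by positivity)
  simp only [evec, Pi.zero_apply, Nat.cast_zero, zero_add, mul_one] at h0
  exact (mul_pos hC hsin).ne' h0

lemma injective_cos_succ_mul_pi_div :
    Function.Injective fun h : Fin n => cos ((h + 1 : ℕ) * π / (n + 1)) := by
  have hmem : ∀ h : Fin n, ((h + 1 : ℕ) : ℝ) * π / (n + 1) ∈ Set.Icc 0 π := by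
    intro h
    refine ⟨by positivity, ?_⟩
    rw [div_le_iff₀ (by positivity)]
    have : ((h + 1 : ℕ) : ℝ) ≤ n + 1 := by exact_mod_cast (by omega : (h : ℕ) + 1 ≤ n + 1)
    nlinarith [pi_pos]
  intro i j hij
  have := injOn_cos (hmem i) (hmem j) hij
  field_simp at this
  exact Fin.ext (by exact_mod_cast Nat.succ_injective (by exact_mod_cast this))

lemma linearIndependent_evec : LinearIndependent ℝ fun h : Fin n => evec n (h + 1) := by
  refine Module.End.eigenvectors_linearIndependent' (toLin' (tridiag n 0 1))
    (fun h : Fin n => lam n 0 1 (h + 1)) ?_ _ fun h => ?_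
  · intro i j hij
    apply injective_cos_succ_mul_pi_div
    simpa [lam] using hij
  · refine ⟨?_, evec_ne_zero (by omega) h.2⟩
    rw [Module.End.mem_eigenspace_iff, toLin'_apply, tridiag_mulVec_evec]

theorem det_tridiag (d s : ℝ) : (tridiag n d s).det = ∏ h : Fin n, lam n d s (h + 1) := by
  let b := basisOfLinearIndependentOfCardEqFinrank' _ (linearIndependent_evec (n := n)) (by simp)
  have hdiag : LinearMap.toMatrix b b (toLin' (tridiag n d s)) =
      diagonal fun h : Fin n => lam n d s (h + 1) := by
    have hb : ∀ h, b h = evec n (h + 1) := by simp [b]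
    ext i j
    rw [LinearMap.toMatrix_apply, hb, toLin'_apply, tridiag_mulVec_evec, ← hb, map_smul,
      b.repr_self]
    rcases eq_or_ne i j with rfl | hij
    · simp
    · simp [hij]
  rw [← LinearMap.det_toLin', ← LinearMap.det_toMatrix b, hdiag, det_diagonal]

lemma sum_fin_ite_val_eq (k : ℕ) (a : ℝ) :
    ∑ j : Fin n, (if k = (j : ℕ) then a else 0) = if k < n then a else 0 := by
  rw [Fin.sum_univ_eq_sum_range (fun j => if k = j then a else 0)]
  simp

lemma frobNorm_tridiag (hn : 1 ≤ n) (d s : ℝ) :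
    frobNorm (tridiag n d s) = sqrt (n * d ^ 2 + 2 * (n - 1) * s ^ 2) := by
  obtain ⟨m, rfl⟩ : ∃ m, n = m + 1 := ⟨n - 1, by omega⟩
  have hterm : ∀ i j : Fin (m + 1), tridiag (m + 1) d s i j ^ 2 =
      (if (i : ℕ) = j then d ^ 2 else 0) + (if (i : ℕ) + 1 = j then s ^ 2 else 0) +
        (if (j : ℕ) + 1 = i then s ^ 2 else 0) := by
    intro i j
    simp only [tridiag, Matrix.of_apply]
    split_ifs <;> first | ring1 | omega
  simp only [frobNorm, hterm, Finset.sum_add_distrib]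
  rw [Finset.sum_comm (f := fun i j : Fin (m + 1) => if (j : ℕ) + 1 = i then s ^ 2 else 0)]
  simp only [sum_fin_ite_val_eq, Fin.is_lt, if_true]
  rw [Fin.sum_univ_eq_sum_range (fun i => if i + 1 < m + 1 then s ^ 2 else 0),
    Finset.sum_range_succ, Finset.sum_ite_of_true fun x hx => by simpa using hx]
  simp only [Finset.sum_const, Finset.card_univ, Fintype.card_fin, Finset.card_range,
    nsmul_eq_mul, lt_self_iff_false, if_false, add_zero]
  push_cast
  ring_nf

lemma sq_add_mul_le {α β : ℝ} (hα : 0 < α) (hβ : 0 < β) (x y u : ℝ) :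
    (x + u * y) ^ 2 ≤ (1 / α + u ^ 2 / β) * (α * x ^ 2 + β * y ^ 2) := by
  have key : (1 / α + u ^ 2 / β) * (α * x ^ 2 + β * y ^ 2) - (x + u * y) ^ 2 =
      (β * y - α * u * x) ^ 2 / (α * β) := by
    field_simp
    ring
  have : 0 ≤ (β * y - α * u * x) ^ 2 / (α * β) := by positivity
  linarith

lemma kap_sq (hn : 2 ≤ n) (h : ℕ) :
    kap n h ^ 2 = 1 / n + 2 / (n - 1) * cos (h * π / (n + 1)) ^ 2 := by
  have : (0 : ℝ) < n - 1 := by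
    rw [sub_pos]; exact_mod_cast hn
  exact sq_sqrt (by positivity)

lemma kap_pos (hn : 2 ≤ n) (h : ℕ) : 0 < kap n h := by
  have : (0 : ℝ) < n - 1 := by
    rw [sub_pos]; exact_mod_cast hn
  exact sqrt_pos.2 (by positivity)

theorem abs_lam_div_kap_le_frobNorm (hn : 2 ≤ n) {d s : ℝ} {h : ℕ} (hS : lam n d s h = 0)
    (δ σ : ℝ) : |lam n δ σ h| / kap n h ≤ frobNorm (tridiag n δ σ - tridiag n d s) := by
  set c := cos (h * π / (n + 1))
  have hn0 : (0 : ℝ) < n := by positivity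
  have hn1 : (0 : ℝ) < n - 1 := by
    rw [sub_pos]; exact_mod_cast hn
  have hlam : lam n δ σ h = (δ - d) + 2 * c * (σ - s) := by
    simp only [lam] at hS ⊢
    linear_combination hS
  rw [tridiag_sub, frobNorm_tridiag (by omega)]
  apply le_sqrt_of_sq_le
  rw [div_pow, sq_abs, kap_sq hn, div_le_iff₀ (by positivity), hlam]
  calc ((δ - d) + 2 * c * (σ - s)) ^ 2
      ≤ (1 / n + (2 * c) ^ 2 / (2 * (n - 1))) *
          (n * (δ - d) ^ 2 + 2 * (n - 1) * (σ - s) ^ 2) :=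
        sq_add_mul_le hn0 (by positivity) _ _ _
    _ = _ := by field_simp; ring

end

/-- On `𝒯` the Frobenius inner product is `n d d' + 2 (n - 1) s s'`, so
`tridiag n (1 / n) (cos (h π / (n + 1)) / (n - 1))` is the gradient of `(d, s) ↦ lam n d s h`
and `kap n h` is its norm: this is the orthogonal projection of `tridiag n δ σ` onto the line
`lam n d s h = 0`. -/
noncomputable def projSingular (n : ℕ) (δ σ : ℝ) (h : ℕ) : Matrix (Fin n) (Fin n) ℝ :=
  tridiag n δ σ - (lam n δ σ h / kap n h ^ 2) •
    tridiag n (1 / (n : ℝ)) (cos (h * π / (n + 1)) / ((n : ℝ) - 1))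

section

variable {n : ℕ} (δ σ : ℝ) (h : ℕ)

lemma projSingular_eq_tridiag :
    projSingular n δ σ h = tridiag n (δ - lam n δ σ h / kap n h ^ 2 * (1 / n))
      (σ - lam n δ σ h / kap n h ^ 2 * (cos (h * π / (n + 1)) / (n - 1))) := by
  rw [projSingular, smul_tridiag, tridiag_sub]

lemma projSingular_apply_self (i : Fin n) :
    projSingular n δ σ h i i = δ - lam n δ σ h / kap n h ^ 2 * (1 / n) := by
  rw [projSingular_eq_tridiag, tridiag_apply_self]

lemma det_projSingular (hn : 2 ≤ n) (h1 : 1 ≤ h) (hhn : h ≤ n) :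
    (projSingular n δ σ h).det = 0 := by
  rw [projSingular_eq_tridiag, det_tridiag]
  refine Finset.prod_eq_zero (i := ⟨h - 1, by omega⟩) (Finset.mem_univ _) ?_
  rw [show (h - 1 + 1 : ℕ) = h by omega]
  have hK0 := pow_ne_zero 2 (kap_pos hn h).ne'
  calc _ = lam n δ σ h - lam n δ σ h / kap n h ^ 2 * kap n h ^ 2 := by
        rw [kap_sq hn h]; simp only [lam]; ring
    _ = 0 := by rw [div_mul_cancel₀ _ hK0, sub_self]

lemma frobNorm_sub_projSingular (hn : 2 ≤ n) :
    frobNorm (tridiag n δ σ - projSingular n δ σ h) = |lam n δ σ h| / kap n h := by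
  have hn1 : (n : ℝ) - 1 ≠ 0 := by
    rw [sub_ne_zero]; exact_mod_cast (by omega : n ≠ 1)
  have hK0 := pow_ne_zero 2 (kap_pos hn h).ne'
  rw [projSingular, sub_sub_cancel, smul_tridiag, frobNorm_tridiag (by omega),
    ← sqrt_sq (div_nonneg (abs_nonneg _) (kap_pos hn h).le), div_pow, sq_abs]
  congr 1
  calc _ = (lam n δ σ h / kap n h ^ 2) ^ 2 * kap n h ^ 2 := by
        rw [kap_sq hn h]; field_simp
    _ = _ := by field_simp

end

section

variable {n : ℕ}

theorem isLeast_frobNorm_sub_singular (hn : 2 ≤ n) (δ σ : ℝ) {h₀ : ℕ} (h₀1 : 1 ≤ h₀)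
    (h₀n : h₀ ≤ n)
    (hmin : ∀ h, 1 ≤ h → h ≤ n → |lam n δ σ h₀| / kap n h₀ ≤ |lam n δ σ h| / kap n h) :
    IsLeast {r : ℝ | ∃ S : Matrix (Fin n) (Fin n) ℝ,
        S.det = 0 ∧ (∃ d s : ℝ, S = tridiag n d s) ∧ r = frobNorm (tridiag n δ σ - S)}
      (|lam n δ σ h₀| / kap n h₀) := by
  refine ⟨⟨projSingular n δ σ h₀, det_projSingular δ σ h₀ hn h₀1 h₀n,
    ⟨_, _, projSingular_eq_tridiag δ σ h₀⟩, (frobNorm_sub_projSingular δ σ h₀ hn).symm⟩, ?_⟩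
  rintro r ⟨S, hdet, ⟨d, s, rfl⟩, rfl⟩
  obtain ⟨h, -, hS⟩ := Finset.prod_eq_zero_iff.1 (det_tridiag (n := n) d s ▸ hdet)
  exact (hmin (h + 1) (by omega) h.2).trans (abs_lam_div_kap_le_frobNorm hn hS δ σ)

lemma cos_reflect {h k : ℕ} (hk : h + k = n + 1) :
    cos (k * π / (n + 1)) = -cos (h * π / (n + 1)) := by
  have : (k : ℝ) = n + 1 - h := by
    rw [eq_sub_iff_add_eq, add_comm]; exact_mod_cast hk
  rw [this, sub_mul, sub_div, mul_div_cancel_left₀ _ (by positivity), cos_pi_sub]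

lemma cos_half_pos : 0 < cos ((n / 2 : ℕ) * π / (n + 1)) := by
  have : 0 ≤ (n / 2 : ℕ) * π / (n + 1) := by positivity
  refine cos_pos_of_mem_Ioo ⟨by linarith [pi_pos], ?_⟩
  rw [div_lt_iff₀ (by positivity)]
  have : (2 * (n / 2 : ℕ) : ℝ) ≤ n := by exact_mod_cast Nat.mul_div_le n 2
  nlinarith [pi_pos]

lemma cos_half_le_cos {j : ℕ} (hj : j ≤ n / 2) :
    cos ((n / 2 : ℕ) * π / (n + 1)) ≤ cos (j * π / (n + 1)) := by
  apply cos_le_cos_of_nonneg_of_le_pi (by positivity)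
  · rw [div_le_iff₀ (by positivity)]
    have : ((n / 2 : ℕ) : ℝ) ≤ n + 1 := by exact_mod_cast (by omega : n / 2 ≤ n + 1)
    nlinarith [pi_pos]
  · gcongr

lemma cos_half_sq_le (heven : Even n) {j : ℕ} (hjn : j ≤ n) :
    cos ((n / 2 : ℕ) * π / (n + 1)) ^ 2 ≤ cos (j * π / (n + 1)) ^ 2 := by
  obtain ⟨k, hk⟩ := heven
  rcases le_or_gt j (n / 2) with hj | hj
  · exact pow_le_pow_left₀ cos_half_pos.le (cos_half_le_cos hj) 2
  · rw [cos_reflect (h := n + 1 - j) (k := j) (by omega), neg_sq]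
    exact pow_le_pow_left₀ cos_half_pos.le (cos_half_le_cos (by omega)) 2

lemma abs_lam_le_of_cos_sq_le (σ : ℝ) {a b : ℕ}
    (hab : cos (a * π / (n + 1)) ^ 2 ≤ cos (b * π / (n + 1)) ^ 2) :
    |lam n 0 σ a| ≤ |lam n 0 σ b| := by
  simp only [lam, zero_add, abs_mul]
  exact mul_le_mul_of_nonneg_left (sq_le_sq.1 hab) (by positivity)

lemma abs_lam_div_kap_le_of_cos_sq_le (hn : 2 ≤ n) (σ : ℝ) {a b : ℕ}
    (hab : cos (a * π / (n + 1)) ^ 2 ≤ cos (b * π / (n + 1)) ^ 2) :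
    |lam n 0 σ a| / kap n a ≤ |lam n 0 σ b| / kap n b := by
  have hn1 : (0 : ℝ) < n - 1 := by
    rw [sub_pos]; exact_mod_cast hn
  rw [← pow_le_pow_iff_left₀ (div_nonneg (abs_nonneg _) (kap_pos hn a).le)
    (div_nonneg (abs_nonneg _) (kap_pos hn b).le) two_ne_zero, div_pow, div_pow,
    sq_abs, sq_abs, kap_sq hn, kap_sq hn, div_le_div_iff₀ (by positivity) (by positivity)]
  simp only [lam]
  have : 0 ≤ σ ^ 2 * (1 / n) * (cos (b * π / (n + 1)) ^ 2 - cos (a * π / (n + 1)) ^ 2) := by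
    have := sub_nonneg.2 hab
    positivity
  nlinarith

end

/-- for even `n`, `δ = 0`, `σ ≠ 0` and `c = cos((n/2)π/(n+1)) > 0`, the eigenvalues
`λ_{n/2} = 2σc = −λ_{(n+2)/2}` are the two of smallest magnitude, `κ(n/2) = κ((n+2)/2)`, the
structured distance to singularity is `|λ_{n/2}|/κ(n/2)`, and it is attained by the two distinct
singular symmetric tridiagonal Toeplitz matrices `M± = T ∓ (λ_{n/2}/κ(n/2)²)·(n; 1/n, ±c/(n−1))`. -/
theorem stmt_19 (n : ℕ) (hn : 2 ≤ n) (heven : Even n) (δ σ : ℝ) (hδ : δ = 0) (hσ : σ ≠ 0)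
    (c : ℝ) (hc : c = Real.cos ((n / 2 : ℕ) * Real.pi / (n + 1)))
    (Mp Mm : Matrix (Fin n) (Fin n) ℝ)
    (hMp : Mp = tridiag n δ σ -
      (lam n δ σ (n / 2) / kap n (n / 2) ^ 2) • tridiag n (1 / (n : ℝ)) (c / ((n : ℝ) - 1)))
    (hMm : Mm = tridiag n δ σ +
      (lam n δ σ (n / 2) / kap n (n / 2) ^ 2) • tridiag n (1 / (n : ℝ)) (-c / ((n : ℝ) - 1))) :
    0 < c ∧
    lam n δ σ (n / 2) = 2 * σ * c ∧
    lam n δ σ ((n + 2) / 2) = -lam n δ σ (n / 2) ∧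
    kap n (n / 2) = kap n ((n + 2) / 2) ∧
    (∀ j : ℕ, 1 ≤ j → j ≤ n → |lam n δ σ (n / 2)| ≤ |lam n δ σ j|) ∧
    Mp ≠ Mm ∧
    (∃ d s : ℝ, Mp = tridiag n d s) ∧ Mp.det = 0 ∧
    (∃ d s : ℝ, Mm = tridiag n d s) ∧ Mm.det = 0 ∧
    frobNorm (tridiag n δ σ - Mp) = |lam n δ σ (n / 2)| / kap n (n / 2) ∧
    frobNorm (tridiag n δ σ - Mm) = |lam n δ σ (n / 2)| / kap n (n / 2) ∧
    IsLeast {r : ℝ | ∃ S : Matrix (Fin n) (Fin n) ℝ,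
        S.det = 0 ∧ (∃ d s : ℝ, S = tridiag n d s) ∧
        r = frobNorm (tridiag n δ σ - S)}
      (|lam n δ σ (n / 2)| / kap n (n / 2)) := by
  subst hδ hc
  have hm1 : 1 ≤ n / 2 := by omega
  have hmn : n / 2 + 1 ≤ n := by omega
  have hsucc : (n + 2) / 2 = n / 2 + 1 := by omega
  have hcos := cos_reflect (n := n) (h := n / 2) (k := n / 2 + 1)
    (by obtain ⟨k, hk⟩ := heven; omega)
  have hlam : lam n 0 σ (n / 2 + 1) = -lam n 0 σ (n / 2) := by simp only [lam, hcos]; ring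
  have hkap : kap n (n / 2 + 1) = kap n (n / 2) := by simp only [kap, hcos, neg_sq]
  have hMp' : Mp = projSingular n 0 σ (n / 2) := hMp
  have hMm' : Mm = projSingular n 0 σ (n / 2 + 1) := by
    rw [hMm, projSingular, hlam, hkap, hcos, neg_div, neg_div, neg_smul, sub_neg_eq_add]
  have hcos_sq (j : ℕ) (hj : j ≤ n) := cos_half_sq_le heven hj
  have hne : Mp ≠ Mm := by
    intro heq
    have h00 := congrFun (congrFun heq ⟨0, by omega⟩) ⟨0, by omega⟩
    rw [hMp', hMm', projSingular_apply_self, projSingular_apply_self, hlam, hkap] at h00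
    have hlam0 : lam n 0 σ (n / 2) ≠ 0 := by simpa [lam, hσ] using cos_half_pos.ne'
    have := (kap_pos hn (n / 2)).ne'
    have : (n : ℝ) ≠ 0 := by positivity
    field_simp at h00
    exact hlam0 (by linarith)
  refine ⟨cos_half_pos, by simp [lam], by rw [hsucc, hlam], by rw [hsucc, hkap],
    fun j _ hj => abs_lam_le_of_cos_sq_le σ (hcos_sq j hj), hne,
    ⟨_, _, hMp'.trans (projSingular_eq_tridiag 0 σ _)⟩,
    hMp' ▸ det_projSingular 0 σ _ hn hm1 (by omega),
    ⟨_, _, hMm'.trans (projSingular_eq_tridiag 0 σ _)⟩,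
    hMm' ▸ det_projSingular 0 σ _ hn (by omega) hmn,
    hMp' ▸ frobNorm_sub_projSingular 0 σ _ hn,
    by rw [hMm', frobNorm_sub_projSingular 0 σ _ hn, hlam, hkap, abs_neg],
    isLeast_frobNorm_sub_singular hn 0 σ hm1 (by omega) fun j _ hj =>
      abs_lam_div_kap_le_of_cos_sq_le hn σ (hcos_sq j hj)⟩
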